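/- Let π₁ be the policy defined by π₁(a) = n(a)/n(p(a)) for every a ∈ A. Then for every reduced strategy σ ∈ S, Σ_{a∈A(σ)} ln(π₁(a)) = −ln(n(r)); equivalently, ∏_{a∈A(σ)} π₁(a) = 1/|S|, so the uniform distribution over reduced strategies is induced. -/

import Mathlib

open scoped Classical

/-- A finite rooted tree whose internal nodes are partitioned into infosets `N`
and actions `A`: the root is an infoset, every child of an infoset is an action,
every child of an action is an infoset or a leaf, and every infoset has at
least two children.  The tree structure is given by a parent function together
with a depth function witnessing well-foundedness. -/
structure EFTree (V : Type*) [Fintype V] [DecidableEq V] where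
  root : V
  parent : V → V
  parent_root : parent root = root
  depth : V → ℕ
  depth_root : depth root = 0
  depth_parent : ∀ v : V, v ≠ root → depth v = depth (parent v) + 1
  N : Finset V
  A : Finset V
  disj : Disjoint N A
  internal_iff : ∀ v : V, (v ∈ N ∨ v ∈ A) ↔ ∃ u : V, u ≠ root ∧ parent u = v
  root_N : root ∈ N
  infoset_child : ∀ u : V, u ≠ root → parent u ∈ N → u ∈ A
  action_child : ∀ u : V, u ≠ root → parent u ∈ A → u ∉ A
  branching : ∀ v ∈ N, 1 < (Finset.univ.filter fun u => u ≠ root ∧ parent u = v).card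

namespace EFTree

variable {V : Type*} [Fintype V] [DecidableEq V] (T : EFTree V)

/-- The set `C(v)` of children of a node `v`. -/
def children (v : V) : Finset V := Finset.univ.filter fun u => u ≠ T.root ∧ T.parent u = v

/-- The set `L` of leaves: the nodes that are neither infosets nor actions. -/
def leaves : Finset V := Finset.univ \ (T.N ∪ T.A)

/-- `Desc u v` means `u` is a descendant of `v` (every node is a descendant of itself). -/
def Desc (u v : V) : Prop := ∃ k : ℕ, T.parent^[k] u = v

/-- The reachable set `V(σ)` of a (sub-)strategy `σ` started at the node `w`:
the minimal set of nodes containing `w`, containing `σ v` for every infoset `v`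
in the set, and containing all children of every action in the set. -/
def reachFrom (w : V) (σ : V → V) : Set V :=
  ⋂₀ {s : Set V | w ∈ s ∧ (∀ v ∈ T.N, v ∈ s → σ v ∈ s) ∧
      ∀ a ∈ T.A, a ∈ s → ∀ u ∈ T.children a, u ∈ s}

/-- The reachable set `V(σ)` of a strategy `σ`. -/
def reachS (σ : V → V) : Set V := T.reachFrom T.root σ

/-- `σ : V → V` canonically represents a reduced sub-strategy at the node `w`:
at every infoset in its reachable set it selects a child, and everywhere else it
is the identity (so that each reduced sub-strategy, i.e. each restriction of a
sub-strategy at `w` to the infosets it can reach, has exactly one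
representative). -/
def IsRedSubStrat (w : V) (σ : V → V) : Prop :=
  (∀ v ∈ T.N, v ∈ T.reachFrom w σ → σ v ∈ T.children v) ∧
  ∀ v : V, ¬(v ∈ T.N ∧ v ∈ T.reachFrom w σ) → σ v = v

/-- `σ : V → V` canonically represents a reduced strategy, i.e. a member of `S`. -/
def IsRedStrat (σ : V → V) : Prop := T.IsRedSubStrat T.root σ

/-- The set `A(σ) = A ∩ V(σ)` of actions reachable under a reduced (sub-)strategy. -/
noncomputable def Aset (σ : V → V) : Finset V := T.A.filter fun a => a ∈ T.reachS σ

/-- The set `A(σ) = A ∩ V(σ)` for a reduced sub-strategy at `w`. -/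
noncomputable def AsetFrom (w : V) (σ : V → V) : Finset V := T.A.filter fun a => a ∈ T.reachFrom w σ

/-- An environment chooses a child of every action. -/
def IsEnv (μ : V → V) : Prop := ∀ a ∈ T.A, μ a ∈ T.children a

/-- The reachable set `V(μ)` of an environment `μ`: the minimal set of nodes
containing the root, all children of every infoset in the set, and `μ a` for
every action `a` in the set. -/
def reachE (μ : V → V) : Set V :=
  ⋂₀ {s : Set V | T.root ∈ s ∧ (∀ v ∈ T.N, v ∈ s → ∀ u ∈ T.children v, u ∈ s) ∧
      ∀ a ∈ T.A, a ∈ s → μ a ∈ s}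

/-- `Z(μ)`: the set of actions reachable under `μ` whose chosen child is a leaf. -/
noncomputable def Zset (μ : V → V) : Finset V := T.A.filter fun a => a ∈ T.reachE μ ∧ μ a ∈ T.leaves

/-- A policy assigns to each action a probability in `[0,1]`, summing to one
over the children of each infoset. -/
def IsPolicy (π : V → ℝ) : Prop :=
  (∀ a ∈ T.A, 0 ≤ π a ∧ π a ≤ 1) ∧ ∀ v ∈ T.N, ∑ a ∈ T.children v, π a = 1

/-- The root-to-leaf path traversed when the reduced strategy `σ` is played
against the environment `μ`: the minimal set of nodes containing the root,
containing `σ v` for every infoset `v` in the set, and `μ a` for every action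
`a` in the set. -/
def playPath (σ μ : V → V) : Set V :=
  ⋂₀ {s : Set V | T.root ∈ s ∧ (∀ v ∈ T.N, v ∈ s → σ v ∈ s) ∧
      ∀ a ∈ T.A, a ∈ s → μ a ∈ s}

/-- `z` is the last action node on the play path of `(σ, μ)`: it is an action on
the path of which every other action on the path is an ancestor. -/
def IsLastAction (σ μ : V → V) (z : V) : Prop :=
  z ∈ T.A ∧ z ∈ T.playPath σ μ ∧ ∀ a ∈ T.A, a ∈ T.playPath σ μ → T.Desc z a

end EFTree

/-!
Along a reduced strategy `σ`, the map `a ↦ p(a)` is a bijection from `A(σ)` onto the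
infosets reached by `σ` (its inverse is `σ`), and the reached infosets other than `r` are
exactly the infoset children of the actions in `A(σ)`. Since `n(a)` is the product of `n`
over the infoset children of `a`, the product of `n(a)` over `A(σ)` is the product of `n`
over the reached infosets other than `r`, while the product of `n(p(a))` is the same
product including `r`: so `∏ π₁(a) = 1 / n(r)`.

Splitting a reduced sub-strategy at an infoset by its chosen action, and at an action into
its restrictions to the subtrees of the infoset children, shows that the number of reduced
sub-strategies below each node satisfies the recursion defining `n`; hence `|S| = n(r)`.
-/

namespace EFTree

variable {V : Type*} [Fintype V] [DecidableEq V] (T : EFTree V)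

theorem mem_children {u v : V} : u ∈ T.children v ↔ u ≠ T.root ∧ T.parent u = v := by
  simp [children]

theorem depth_of_mem_children {u v : V} (h : u ∈ T.children v) :
    T.depth u = T.depth v + 1 := by
  obtain ⟨hu, rfl⟩ := T.mem_children.mp h
  exact T.depth_parent u hu

theorem wellFounded_children : WellFounded fun u w => u ∈ T.children w :=
  Subrelation.wf (fun h => by rw [T.depth_of_mem_children h]; omega)
    (Finite.wellFounded_of_trans_of_irrefl fun u w : V => T.depth w < T.depth u)

@[elab_as_elim]
theorem children_induction {P : V → Prop} (h : ∀ w, (∀ u ∈ T.children w, P u) → P w)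
    (w : V) : P w :=
  T.wellFounded_children.induction w h

theorem children_nonempty {v : V} (hv : v ∈ T.N) : (T.children v).Nonempty :=
  Finset.card_pos.mp (by have := T.branching v hv; unfold children; omega)

theorem notMem_N_of_mem_A {a : V} (ha : a ∈ T.A) : a ∉ T.N :=
  Finset.disjoint_right.mp T.disj ha

theorem ne_root_of_mem_A {a : V} (ha : a ∈ T.A) : a ≠ T.root :=
  fun h => T.notMem_N_of_mem_A ha (h ▸ T.root_N)

theorem mem_A_of_mem_children {v u : V} (hv : v ∈ T.N) (hu : u ∈ T.children v) : u ∈ T.A := by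
  obtain ⟨hne, rfl⟩ := T.mem_children.mp hu
  exact T.infoset_child u hne hv

theorem notMem_A_of_mem_children {a u : V} (ha : a ∈ T.A) (hu : u ∈ T.children a) :
    u ∉ T.A := by
  obtain ⟨hne, rfl⟩ := T.mem_children.mp hu
  exact T.action_child u hne ha

theorem parent_mem_N_of_mem_A {a : V} (ha : a ∈ T.A) : T.parent a ∈ T.N := by
  have hr := T.ne_root_of_mem_A ha
  exact ((T.internal_iff _).mpr ⟨a, hr, rfl⟩).resolve_right (T.action_child a hr · ha)

theorem parent_mem_A_of_mem_N {v : V} (hv : v ∈ T.N) (hr : v ≠ T.root) : T.parent v ∈ T.A :=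
  ((T.internal_iff _).mpr ⟨v, hr, rfl⟩).resolve_left
    fun h => T.notMem_N_of_mem_A (T.infoset_child v hr h) hv

theorem iterate_parent_root (k : ℕ) : T.parent^[k] T.root = T.root :=
  Function.iterate_fixed T.parent_root k

theorem depth_eq_depth_iterate_parent_add {x : V} {k : ℕ} (h : T.parent^[k] x ≠ T.root) :
    T.depth x = T.depth (T.parent^[k] x) + k := by
  induction k generalizing x with
  | zero => rfl
  | succ k ih =>
    rw [Function.iterate_succ_apply] at h ⊢
    have hx : x ≠ T.root := by
      rintro rfl
      rw [T.parent_root, T.iterate_parent_root] at h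
      exact h rfl
    rw [T.depth_parent x hx, ih h]
    omega

theorem desc_of_mem_children {u v w : V} (hu : u ∈ T.children v) (hv : T.Desc v w) :
    T.Desc u w := by
  obtain ⟨k, rfl⟩ := hv
  exact ⟨k + 1, by rw [Function.iterate_succ_apply, (T.mem_children.mp hu).2]⟩

theorem not_desc_of_mem_children {u v : V} (hu : u ∈ T.children v) : ¬ T.Desc v u := by
  rintro ⟨k, rfl⟩
  have := T.depth_eq_depth_iterate_parent_add (T.mem_children.mp hu).1
  have := T.depth_of_mem_children hu
  omega

theorem eq_of_desc_of_mem_children {a u₁ u₂ x : V} (h₁ : u₁ ∈ T.children a)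
    (h₂ : u₂ ∈ T.children a) (hx₁ : T.Desc x u₁) (hx₂ : T.Desc x u₂) :
    u₁ = u₂ := by
  obtain ⟨k₁, rfl⟩ := hx₁
  obtain ⟨k₂, rfl⟩ := hx₂
  have := T.depth_eq_depth_iterate_parent_add (T.mem_children.mp h₁).1
  have := T.depth_eq_depth_iterate_parent_add (T.mem_children.mp h₂).1
  have := T.depth_of_mem_children h₁
  have := T.depth_of_mem_children h₂
  obtain rfl : k₁ = k₂ := by omega
  rfl

section Reach

variable {w : V} {σ τ : V → V}

theorem reachFrom_subset {s : Set V} (hw : w ∈ s) (hN : ∀ v ∈ T.N, v ∈ s → σ v ∈ s)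
    (hA : ∀ a ∈ T.A, a ∈ s → ∀ u ∈ T.children a, u ∈ s) : T.reachFrom w σ ⊆ s :=
  Set.sInter_subset_of_mem ⟨hw, hN, hA⟩

theorem self_mem_reachFrom (w : V) (σ : V → V) : w ∈ T.reachFrom w σ :=
  Set.mem_sInter.mpr fun _ hs => hs.1

theorem apply_mem_reachFrom {v : V} (hv : v ∈ T.N) (hr : v ∈ T.reachFrom w σ) :
    σ v ∈ T.reachFrom w σ :=
  Set.mem_sInter.mpr fun s hs => hs.2.1 v hv (hr s hs)

theorem mem_reachFrom_of_mem_children {a u : V} (ha : a ∈ T.A) (hr : a ∈ T.reachFrom w σ)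
    (hu : u ∈ T.children a) : u ∈ T.reachFrom w σ :=
  Set.mem_sInter.mpr fun s hs => hs.2.2 a ha (hr s hs) u hu

theorem reachFrom_subset_of_mem {u : V} (hu : u ∈ T.reachFrom w σ) :
    T.reachFrom u σ ⊆ T.reachFrom w σ :=
  T.reachFrom_subset hu (fun _ hv hr => T.apply_mem_reachFrom hv hr)
    fun _ ha hr _ hu => T.mem_reachFrom_of_mem_children ha hr hu

theorem reachFrom_congr (h : ∀ v ∈ T.N, v ∈ T.reachFrom w σ → τ v = σ v) :
    T.reachFrom w τ = T.reachFrom w σ := by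
  have hsub : T.reachFrom w τ ⊆ T.reachFrom w σ :=
    T.reachFrom_subset (T.self_mem_reachFrom w σ)
      (fun v hv hr => h v hv hr ▸ T.apply_mem_reachFrom hv hr)
      fun _ ha hr _ hu => T.mem_reachFrom_of_mem_children ha hr hu
  refine hsub.antisymm <| T.reachFrom_subset (T.self_mem_reachFrom w τ)
    (fun v hv hr => ?_) fun _ ha hr _ hu => T.mem_reachFrom_of_mem_children ha hr hu
  rw [← h v hv (hsub hr)]
  exact T.apply_mem_reachFrom hv hr

theorem reachFrom_eq_singleton (hN : w ∉ T.N) (hA : w ∉ T.A) (σ : V → V) :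
    T.reachFrom w σ = {w} :=
  (T.reachFrom_subset (Set.mem_singleton w)
    (fun _ hv hr => absurd (Set.mem_singleton_iff.mp hr ▸ hv) hN)
    fun _ ha hr => absurd (Set.mem_singleton_iff.mp hr ▸ ha) hA).antisymm
    (Set.singleton_subset_iff.mpr (T.self_mem_reachFrom w σ))

theorem reachFrom_of_mem_N (hw : w ∈ T.N) (σ : V → V) :
    T.reachFrom w σ = insert w (T.reachFrom (σ w) σ) := by
  refine (T.reachFrom_subset (Set.mem_insert _ _) ?_ ?_).antisymm <|
    Set.insert_subset (T.self_mem_reachFrom w σ)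
      (T.reachFrom_subset_of_mem (T.apply_mem_reachFrom hw (T.self_mem_reachFrom w σ)))
  · rintro v hv (rfl | hr)
    · exact Set.mem_insert_of_mem _ (T.self_mem_reachFrom _ σ)
    · exact Set.mem_insert_of_mem _ (T.apply_mem_reachFrom hv hr)
  · rintro a ha (rfl | hr) u hu
    · exact absurd hw (T.notMem_N_of_mem_A ha)
    · exact Set.mem_insert_of_mem _ (T.mem_reachFrom_of_mem_children ha hr hu)

theorem reachFrom_of_mem_A {a : V} (ha : a ∈ T.A) (σ : V → V) :
    T.reachFrom a σ = insert a (⋃ u ∈ T.children a, T.reachFrom u σ) := by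
  refine (T.reachFrom_subset (Set.mem_insert _ _) ?_ ?_).antisymm <|
    Set.insert_subset (T.self_mem_reachFrom a σ) <| Set.iUnion₂_subset fun u hu =>
      T.reachFrom_subset_of_mem (T.mem_reachFrom_of_mem_children ha (T.self_mem_reachFrom a σ) hu)
  · rintro v hv (rfl | hr)
    · exact absurd hv (T.notMem_N_of_mem_A ha)
    · obtain ⟨u, hu, hr⟩ := Set.mem_iUnion₂.mp hr
      exact Set.mem_insert_of_mem _ (Set.mem_iUnion₂.mpr ⟨u, hu, T.apply_mem_reachFrom hv hr⟩)
  · rintro b hb (rfl | hr) u hu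
    · exact Set.mem_insert_of_mem _ (Set.mem_iUnion₂.mpr ⟨u, hu, T.self_mem_reachFrom u σ⟩)
    · obtain ⟨u', hu', hr⟩ := Set.mem_iUnion₂.mp hr
      exact Set.mem_insert_of_mem _
        (Set.mem_iUnion₂.mpr ⟨u', hu', T.mem_reachFrom_of_mem_children hb hr hu⟩)

end Reach

def IsSubStrat (w : V) (σ : V → V) : Prop :=
  ∀ v ∈ T.N, v ∈ T.reachFrom w σ → σ v ∈ T.children v

section SubStrat

variable {T} {w : V} {σ : V → V}

theorem IsSubStrat.mono {u : V} (h : T.IsSubStrat w σ) (hu : u ∈ T.reachFrom w σ) :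
    T.IsSubStrat u σ :=
  fun v hv hr => h v hv (T.reachFrom_subset_of_mem hu hr)

theorem IsSubStrat.desc_of_mem_reachFrom (h : T.IsSubStrat w σ) {x : V}
    (hx : x ∈ T.reachFrom w σ) : T.Desc x w := by
  have hsub : T.reachFrom w σ ⊆ T.reachFrom w σ ∩ {x | T.Desc x w} :=
    T.reachFrom_subset ⟨T.self_mem_reachFrom w σ, 0, rfl⟩
      (fun v hv ⟨hr, hd⟩ =>
        ⟨T.apply_mem_reachFrom hv hr, T.desc_of_mem_children (h v hv hr) hd⟩)
      fun _ ha ⟨hr, hd⟩ _ hu =>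
        ⟨T.mem_reachFrom_of_mem_children ha hr hu, T.desc_of_mem_children hu hd⟩
  exact (hsub hx).2

theorem IsSubStrat.notMem_reachFrom {u v : V} (h : T.IsSubStrat u σ)
    (hu : u ∈ T.children v) : v ∉ T.reachFrom u σ :=
  fun hv => T.not_desc_of_mem_children hu (h.desc_of_mem_reachFrom hv)

theorem eq_of_mem_reachFrom_children {a u₁ u₂ x : V} {σ₁ σ₂ : V → V}
    (h₁ : u₁ ∈ T.children a) (h₂ : u₂ ∈ T.children a) (hσ₁ : T.IsSubStrat u₁ σ₁)
    (hσ₂ : T.IsSubStrat u₂ σ₂) (hx₁ : x ∈ T.reachFrom u₁ σ₁)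
    (hx₂ : x ∈ T.reachFrom u₂ σ₂) :
    u₁ = u₂ :=
  T.eq_of_desc_of_mem_children h₁ h₂ (hσ₁.desc_of_mem_reachFrom hx₁)
    (hσ₂.desc_of_mem_reachFrom hx₂)

theorem IsSubStrat.parent_mem_reachFrom (h : T.IsSubStrat w σ) {x : V}
    (hx : x ∈ T.reachFrom w σ) (hxw : x ≠ w) :
    T.parent x ∈ T.reachFrom w σ ∧ (T.parent x ∈ T.N → σ (T.parent x) = x) := by
  have hsub : T.reachFrom w σ ⊆ {x | x ∈ T.reachFrom w σ ∧ (x = w ∨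
      T.parent x ∈ T.reachFrom w σ ∧ (T.parent x ∈ T.N → σ (T.parent x) = x))} := by
    refine T.reachFrom_subset ⟨T.self_mem_reachFrom w σ, Or.inl rfl⟩
      (fun v hv ⟨hr, _⟩ => ⟨T.apply_mem_reachFrom hv hr, Or.inr ?_⟩)
      fun a ha ⟨hr, _⟩ u hu => ⟨T.mem_reachFrom_of_mem_children ha hr hu, Or.inr ?_⟩
    · rw [(T.mem_children.mp (h v hv hr)).2]
      exact ⟨hr, fun _ => rfl⟩
    · rw [(T.mem_children.mp hu).2]
      exact ⟨hr, fun haN => absurd haN (T.notMem_N_of_mem_A ha)⟩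
  exact (hsub hx).2.resolve_left hxw

end SubStrat

section Telescoping

variable {σ : V → V} {M : Type*} [CommMonoid M]

theorem prod_Aset_parent (hσ : T.IsSubStrat T.root σ) (f : V → M) :
    ∏ a ∈ T.Aset σ, f (T.parent a) = ∏ v ∈ T.N.filter (· ∈ T.reachS σ), f v := by
  refine Finset.prod_nbij' T.parent σ (fun a ha => ?_) (fun v hv => ?_) (fun a ha => ?_)
    (fun v hv => ?_) fun _ _ => rfl
  · rw [Aset, Finset.mem_filter] at ha
    exact Finset.mem_filter.mpr ⟨T.parent_mem_N_of_mem_A ha.1,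
      (hσ.parent_mem_reachFrom ha.2 (T.ne_root_of_mem_A ha.1)).1⟩
  · rw [Finset.mem_filter] at hv
    exact Finset.mem_filter.mpr
      ⟨T.mem_A_of_mem_children hv.1 (hσ v hv.1 hv.2), T.apply_mem_reachFrom hv.1 hv.2⟩
  · rw [Aset, Finset.mem_filter] at ha
    exact (hσ.parent_mem_reachFrom ha.2 (T.ne_root_of_mem_A ha.1)).2
      (T.parent_mem_N_of_mem_A ha.1)
  · exact (T.mem_children.mp (hσ v (Finset.mem_filter.mp hv).1 (Finset.mem_filter.mp hv).2)).2

theorem prod_Aset_prod_children (hσ : T.IsSubStrat T.root σ) (f : V → M) :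
    ∏ a ∈ T.Aset σ, ∏ v ∈ (T.children a).filter (· ∈ T.N), f v =
      ∏ v ∈ (T.N.filter (· ∈ T.reachS σ)).erase T.root, f v := by
  have hmaps :
      ∀ v ∈ (T.N.filter (· ∈ T.reachS σ)).erase T.root, T.parent v ∈ T.Aset σ := by
    intro v hv
    simp only [Aset, Finset.mem_erase, Finset.mem_filter] at hv ⊢
    exact ⟨T.parent_mem_A_of_mem_N hv.2.1 hv.1, (hσ.parent_mem_reachFrom hv.2.2 hv.1).1⟩
  rw [← Finset.prod_fiberwise_of_maps_to hmaps]
  refine Finset.prod_congr rfl fun a ha => Finset.prod_congr ?_ fun _ _ => rfl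
  simp only [Aset, Finset.mem_filter] at ha
  ext v
  simp only [Finset.mem_filter, Finset.mem_erase, T.mem_children]
  constructor
  · rintro ⟨⟨hr, rfl⟩, hv⟩
    exact ⟨⟨hr, hv, T.mem_reachFrom_of_mem_children ha.1 ha.2
      (T.mem_children.mpr ⟨hr, rfl⟩)⟩, rfl⟩
  · rintro ⟨⟨hr, hv, -⟩, rfl⟩
    exact ⟨⟨hr, rfl⟩, hv⟩

end Telescoping

section Weights

variable {n : V → ℕ}

theorem pos_of_mem_N_or_mem_A
    (hnA : ∀ a ∈ T.A, n a = ∏ v ∈ (T.children a).filter (· ∈ T.N), n v)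
    (hnN : ∀ v ∈ T.N, n v = ∑ a ∈ T.children v, n a) {w : V}
    (hw : w ∈ T.N ∨ w ∈ T.A) :
    0 < n w := by
  induction w using T.children_induction with
  | h w ih =>
    rcases hw with hw | hw
    · obtain ⟨a, ha⟩ := T.children_nonempty hw
      rw [hnN w hw]
      exact (ih a ha (Or.inr (T.mem_A_of_mem_children hw ha))).trans_le
        (Finset.single_le_sum (fun _ _ => Nat.zero_le _) ha)
    · rw [hnA w hw]
      exact Finset.prod_pos fun u hu =>
        ih u (Finset.mem_filter.mp hu).1 (Or.inl (Finset.mem_filter.mp hu).2)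

theorem root_mul_prod_Aset
    (hnA : ∀ a ∈ T.A, n a = ∏ v ∈ (T.children a).filter (· ∈ T.N), n v)
    {σ : V → V} (hσ : T.IsSubStrat T.root σ) :
    n T.root * ∏ a ∈ T.Aset σ, n a = ∏ a ∈ T.Aset σ, n (T.parent a) := by
  have hroot : T.root ∈ T.N.filter (· ∈ T.reachS σ) :=
    Finset.mem_filter.mpr ⟨T.root_N, T.self_mem_reachFrom _ σ⟩
  rw [T.prod_Aset_parent hσ, ← Finset.mul_prod_erase _ _ hroot,
    ← T.prod_Aset_prod_children hσ]
  exact congrArg _ (Finset.prod_congr rfl fun a ha => hnA a (Finset.mem_filter.mp ha).1)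

theorem prod_Aset_div_parent
    (hnA : ∀ a ∈ T.A, n a = ∏ v ∈ (T.children a).filter (· ∈ T.N), n v)
    (hnN : ∀ v ∈ T.N, n v = ∑ a ∈ T.children v, n a)
    {σ : V → V} (hσ : T.IsSubStrat T.root σ) :
    ∏ a ∈ T.Aset σ, ((n a : ℝ) / n (T.parent a)) = 1 / n T.root := by
  have hprod : (∏ a ∈ T.Aset σ, (n a : ℝ)) ≠ 0 := Finset.prod_ne_zero_iff.mpr fun a ha =>
    Nat.cast_ne_zero.mpr (T.pos_of_mem_N_or_mem_A hnA hnN (Or.inr (Finset.mem_filter.mp ha).1)).ne'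
  have h := congrArg (Nat.cast (R := ℝ)) (T.root_mul_prod_Aset hnA hσ)
  push_cast at h
  rw [Finset.prod_div_distrib, ← h, div_mul_cancel_right₀ hprod, one_div]

end Weights

noncomputable def redSubStrats (w : V) : Finset (V → V) :=
  Finset.univ.filter (T.IsRedSubStrat w)

noncomputable def restrictTo (u : V) (σ : V → V) : V → V :=
  fun v => if v ∈ T.N ∧ v ∈ T.reachFrom u σ then σ v else v

section Restrict

variable {T} {u v w : V} {σ τ : V → V}

theorem mem_redSubStrats : σ ∈ T.redSubStrats w ↔ T.IsRedSubStrat w σ := by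
  simp [redSubStrats]

theorem restrictTo_apply_of_mem (hv : v ∈ T.N) (hr : v ∈ T.reachFrom u σ) :
    T.restrictTo u σ v = σ v :=
  if_pos ⟨hv, hr⟩

theorem reachFrom_restrictTo (u : V) (σ : V → V) :
    T.reachFrom u (T.restrictTo u σ) = T.reachFrom u σ :=
  T.reachFrom_congr fun _ hv hr => restrictTo_apply_of_mem hv hr

theorem apply_eq_of_restrictTo_eq (h : T.restrictTo u τ = T.restrictTo u σ) (hv : v ∈ T.N)
    (hr : v ∈ T.reachFrom u σ) : τ v = σ v := by
  have hr' : v ∈ T.reachFrom u τ := by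
    rwa [← reachFrom_restrictTo, h, reachFrom_restrictTo]
  rw [← restrictTo_apply_of_mem hv hr', h, restrictTo_apply_of_mem hv hr]

theorem IsSubStrat.isRedSubStrat_restrictTo (h : T.IsSubStrat u σ) :
    T.IsRedSubStrat u (T.restrictTo u σ) := by
  refine ⟨fun v hv hr => ?_, fun v hv => ?_⟩
  · rw [reachFrom_restrictTo] at hr
    rw [restrictTo_apply_of_mem hv hr]
    exact h v hv hr
  · rw [reachFrom_restrictTo] at hv
    exact if_neg hv

theorem IsRedSubStrat.isSubStrat (h : T.IsRedSubStrat w σ) : T.IsSubStrat w σ :=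
  h.1

theorem IsRedSubStrat.ext (hσ : T.IsRedSubStrat w σ) (hτ : T.IsRedSubStrat w τ)
    (h : ∀ v ∈ T.N, v ∈ T.reachFrom w σ → τ v = σ v) : τ = σ := by
  have hr := T.reachFrom_congr h
  funext v
  by_cases hv : v ∈ T.N ∧ v ∈ T.reachFrom w σ
  · exact h v hv.1 hv.2
  · rw [hσ.2 v hv, hτ.2 v (hr ▸ hv)]

end Restrict

section InfosetStep

variable {T} {w a : V} {σ τ : V → V}

theorem IsRedSubStrat.update (hw : w ∈ T.N) (ha : a ∈ T.children w)
    (hτ : T.IsRedSubStrat a τ) :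
    T.IsRedSubStrat w (Function.update τ w a) ∧
      T.restrictTo a (Function.update τ w a) = τ := by
  have hwτ : w ∉ T.reachFrom a τ := hτ.isSubStrat.notMem_reachFrom ha
  have hagree : ∀ v ∈ T.N, v ∈ T.reachFrom a τ → Function.update τ w a v = τ v :=
    fun v _ hv => Function.update_of_ne (ne_of_mem_of_not_mem hv hwτ) _ _
  have hra := T.reachFrom_congr hagree
  have hrw : T.reachFrom w (Function.update τ w a) = insert w (T.reachFrom a τ) := by
    rw [T.reachFrom_of_mem_N hw, Function.update_self, hra]
  have hσ : T.IsRedSubStrat w (Function.update τ w a) := by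
    refine ⟨fun v hv hr => ?_, fun v hv => ?_⟩
    · rw [hrw] at hr
      rcases hr with rfl | hr
      · rwa [Function.update_self]
      · rw [hagree v hv hr]
        exact hτ.1 v hv hr
    · rw [hrw] at hv
      have hvw : v ≠ w := by
        rintro rfl
        exact hv ⟨hw, Set.mem_insert _ _⟩
      rw [Function.update_of_ne hvw]
      exact hτ.2 v fun h => hv ⟨h.1, Set.mem_insert_of_mem _ h.2⟩
  have haσ : a ∈ T.reachFrom w (Function.update τ w a) := by
    rw [hrw]
    exact Set.mem_insert_of_mem _ (T.self_mem_reachFrom a τ)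
  refine ⟨hσ, hτ.ext (hσ.isSubStrat.mono haσ).isRedSubStrat_restrictTo fun v hv hr => ?_⟩
  rw [restrictTo_apply_of_mem hv (hra ▸ hr), hagree v hv hr]

theorem card_redSubStrats_of_mem_N (hw : w ∈ T.N) :
    (T.redSubStrats w).card = ∑ a ∈ T.children w, (T.redSubStrats a).card := by
  rw [← Finset.card_sigma]
  refine Finset.card_bij (fun σ _ => ⟨σ w, T.restrictTo (σ w) σ⟩) (fun σ hσ => ?_)
    (fun σ hσ τ hτ h => ?_) fun ⟨a, τ⟩ h => ?_
  · rw [mem_redSubStrats] at hσ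
    have hσw := T.apply_mem_reachFrom hw (T.self_mem_reachFrom w σ)
    exact Finset.mem_sigma.mpr ⟨hσ.1 w hw (T.self_mem_reachFrom w σ),
      mem_redSubStrats.mpr (hσ.isSubStrat.mono hσw).isRedSubStrat_restrictTo⟩
  · rw [mem_redSubStrats] at hσ hτ
    simp only [Sigma.mk.inj_iff, heq_eq_eq] at h
    obtain ⟨hw', h⟩ := h
    rw [← hw'] at h
    refine (hσ.ext hτ fun v hv hr => ?_).symm
    rw [T.reachFrom_of_mem_N hw] at hr
    rcases hr with rfl | hr
    · exact hw'.symm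
    · exact apply_eq_of_restrictTo_eq h.symm hv hr
  · rw [Finset.mem_sigma, mem_redSubStrats] at h
    obtain ⟨hσ, hres⟩ := h.2.update hw h.1
    refine ⟨_, mem_redSubStrats.mpr hσ, ?_⟩
    simp only [Function.update_self, hres]

end InfosetStep

/-- Only meaningful when the sets reached by the `g u` are pairwise disjoint: otherwise
`choose` picks one of the competing `g u` arbitrarily. -/
noncomputable def glue (s : Finset V) (g : ∀ u ∈ s, V → V) : V → V := fun v =>
  if h : ∃ u : s, v ∈ T.N ∧ v ∈ T.reachFrom u (g u u.2) then g h.choose h.choose.2 v else v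

section ActionStep

variable {T} {a : V} {σ τ : V → V}

theorem exists_mem_reachFrom_child (ha : a ∈ T.A) {v : V} (hv : v ∈ T.N)
    (hr : v ∈ T.reachFrom a σ) :
    ∃ u ∈ (T.children a).filter (· ∈ T.N), v ∈ T.reachFrom u σ := by
  rw [T.reachFrom_of_mem_A ha] at hr
  rcases hr with rfl | hr
  · exact absurd hv (T.notMem_N_of_mem_A ha)
  obtain ⟨u, hu, hvu⟩ := Set.mem_iUnion₂.mp hr
  have huN : u ∈ T.N := by
    by_contra huN
    rw [T.reachFrom_eq_singleton huN (T.notMem_A_of_mem_children ha hu)] at hvu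
    exact huN (Set.mem_singleton_iff.mp hvu ▸ hv)
  exact ⟨u, Finset.mem_filter.mpr ⟨hu, huN⟩, hvu⟩

theorem glue_apply_of_mem {s : Finset V} {g : ∀ u ∈ s, V → V}
    (hdisj : ∀ u₁ u₂ : s, ∀ v, v ∈ T.reachFrom u₁ (g u₁ u₁.2) →
      v ∈ T.reachFrom u₂ (g u₂ u₂.2) → u₁ = u₂)
    {u v : V} (hu : u ∈ s) (hv : v ∈ T.N) (hr : v ∈ T.reachFrom u (g u hu)) :
    T.glue s g v = g u hu v := by
  have h : ∃ u : s, v ∈ T.N ∧ v ∈ T.reachFrom u (g u u.2) := ⟨⟨u, hu⟩, hv, hr⟩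
  rw [glue, dif_pos h]
  simp only [hdisj _ ⟨u, hu⟩ v h.choose_spec.2 hr]

theorem exists_isRedSubStrat_restrictTo_eq (ha : a ∈ T.A)
    {g : ∀ u ∈ (T.children a).filter (· ∈ T.N), V → V}
    (hg : ∀ u hu, T.IsRedSubStrat u (g u hu)) :
    ∃ σ, T.IsRedSubStrat a σ ∧ ∀ u hu, T.restrictTo u σ = g u hu := by
  generalize hs : (T.children a).filter (· ∈ T.N) = s at g hg
  have hsa : ∀ u ∈ s, u ∈ T.children a := fun u hu => (Finset.mem_filter.mp (hs ▸ hu)).1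
  have hdisj : ∀ u₁ u₂ : s, ∀ v, v ∈ T.reachFrom u₁ (g u₁ u₁.2) →
      v ∈ T.reachFrom u₂ (g u₂ u₂.2) → u₁ = u₂ := fun u₁ u₂ _ h₁ h₂ =>
    Subtype.ext (T.eq_of_mem_reachFrom_children (hsa _ u₁.2) (hsa _ u₂.2)
      (hg _ u₁.2).isSubStrat (hg _ u₂.2).isSubStrat h₁ h₂)
  have hreach : ∀ u hu, T.reachFrom u (T.glue s g) = T.reachFrom u (g u hu) := fun u hu =>
    T.reachFrom_congr fun _ hv hr => glue_apply_of_mem hdisj hu hv hr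
  have hsub : ∀ u ∈ s, T.reachFrom u (T.glue s g) ⊆ T.reachFrom a (T.glue s g) := fun u hu =>
    T.reachFrom_subset_of_mem
      (T.mem_reachFrom_of_mem_children ha (T.self_mem_reachFrom a _) (hsa u hu))
  have hσ : T.IsRedSubStrat a (T.glue s g) := by
    refine ⟨fun v hv hr => ?_, fun v hv => dif_neg ?_⟩
    · obtain ⟨u, hu, hvu⟩ := exists_mem_reachFrom_child ha hv hr
      rw [hs] at hu
      rw [hreach u hu] at hvu
      rw [glue_apply_of_mem hdisj hu hv hvu]
      exact (hg u hu).1 v hv hvu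
    · rintro ⟨⟨u, hu⟩, hvN, hvu⟩
      exact hv ⟨hvN, hsub u hu ((hreach u hu).symm ▸ hvu)⟩
  refine ⟨T.glue s g, hσ, fun u hu => ?_⟩
  have hres := (hσ.isSubStrat.mono (hsub u hu (T.self_mem_reachFrom u _))).isRedSubStrat_restrictTo
  refine (hg u hu).ext hres fun v hv hr => ?_
  rw [restrictTo_apply_of_mem hv ((hreach u hu).symm ▸ hr), glue_apply_of_mem hdisj hu hv hr]

theorem card_redSubStrats_of_mem_A (ha : a ∈ T.A) :
    (T.redSubStrats a).card =
      ∏ u ∈ (T.children a).filter (· ∈ T.N), (T.redSubStrats u).card := by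
  rw [← Finset.card_pi]
  refine Finset.card_bij (fun σ _ u _ => T.restrictTo u σ) (fun σ hσ => ?_)
    (fun σ hσ τ hτ h => ?_) fun g hg => ?_
  · rw [mem_redSubStrats] at hσ
    refine Finset.mem_pi.mpr fun u hu =>
      mem_redSubStrats.mpr (hσ.isSubStrat.mono ?_).isRedSubStrat_restrictTo
    exact T.mem_reachFrom_of_mem_children ha (T.self_mem_reachFrom a σ)
      (Finset.mem_filter.mp hu).1
  · rw [mem_redSubStrats] at hσ hτ
    refine (hσ.ext hτ fun v hv hr => ?_).symm
    obtain ⟨u, hu, hvu⟩ := exists_mem_reachFrom_child ha hv hr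
    exact apply_eq_of_restrictTo_eq (congrFun (congrFun h u) hu).symm hv hvu
  · obtain ⟨σ, hσ, hres⟩ := exists_isRedSubStrat_restrictTo_eq ha
      fun u hu => mem_redSubStrats.mp (Finset.mem_pi.mp hg u hu)
    exact ⟨σ, mem_redSubStrats.mpr hσ, funext₂ hres⟩

end ActionStep

theorem card_redSubStrats {n : V → ℕ}
    (hnA : ∀ a ∈ T.A, n a = ∏ v ∈ (T.children a).filter (· ∈ T.N), n v)
    (hnN : ∀ v ∈ T.N, n v = ∑ a ∈ T.children v, n a) {w : V}
    (hw : w ∈ T.N ∨ w ∈ T.A) :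
    (T.redSubStrats w).card = n w := by
  induction w using T.children_induction with
  | h w ih =>
    rcases hw with hw | hw
    · rw [card_redSubStrats_of_mem_N hw, hnN w hw]
      exact Finset.sum_congr rfl fun a ha => ih a ha (Or.inr (T.mem_A_of_mem_children hw ha))
    · rw [card_redSubStrats_of_mem_A hw, hnA w hw]
      exact Finset.prod_congr rfl fun u hu =>
        ih u (Finset.mem_filter.mp hu).1 (Or.inl (Finset.mem_filter.mp hu).2)

end EFTree

theorem stmt8 {V : Type*} [Fintype V] [DecidableEq V] (T : EFTree V)
    (n : V → ℕ)
    (hnA : ∀ a ∈ T.A, n a = ∏ v ∈ (T.children a).filter (· ∈ T.N), n v)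
    (hnN : ∀ v ∈ T.N, n v = ∑ a ∈ T.children v, n a)
    (σ : V → V) (hσ : T.IsRedStrat σ) :
    (∑ a ∈ T.Aset σ, Real.log ((n a : ℝ) / (n (T.parent a) : ℝ)) =
        -Real.log (n T.root : ℝ)) ∧
    ∏ a ∈ T.Aset σ, ((n a : ℝ) / (n (T.parent a) : ℝ)) =
        1 / (Nat.card {σ : V → V // T.IsRedStrat σ} : ℝ) := by
  have hprod := T.prod_Aset_div_parent hnA hnN hσ.isSubStrat
  have hcard : Nat.card {σ : V → V // T.IsRedStrat σ} = n T.root := by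
    rw [Nat.card_eq_fintype_card, Fintype.card_subtype]
    exact T.card_redSubStrats hnA hnN (Or.inl T.root_N)
  have hne : ∀ a ∈ T.Aset σ, (n a : ℝ) / n (T.parent a) ≠ 0 := fun a ha => by
    have hA := (Finset.mem_filter.mp ha).1
    have := T.pos_of_mem_N_or_mem_A hnA hnN (Or.inr hA)
    have := T.pos_of_mem_N_or_mem_A hnA hnN (Or.inl (T.parent_mem_N_of_mem_A hA))
    positivity
  exact ⟨by rw [← Real.log_prod hne, hprod, one_div, Real.log_inv], by rw [hprod, hcard]⟩
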